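/- arXiv:math/0702892 — 4 statements merged into one kernel-verified Lean document; each statement's English description precedes it below -/
import Mathlib

section
/- Let T ⊆ ℝ^d be a d-dimensional simplex (the convex hull of d+1 affinely independent points), let p be a vertex of T, and let u be a unit vector such that p − εu lies in the interior of T for all sufficiently small ε > 0. Then there exists a constant C ≥ 0, depending only on T, p and u (not on λ), such that for every λ ∈ (0,1) there is t₀ > 0 with vol( ((1−λ)T) ∩ ( (−λT) + p − t u ) ) = C t^d for all t ∈ (0, t₀). -/
open MeasureTheory Pointwise

noncomputable def covar {d : ℕ} (K : Set (EuclideanSpace ℝ (Fin d)))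
    (x : EuclideanSpace ℝ (Fin d)) : ℝ :=
  (volume (K ∩ ((x + ·) '' K))).toReal

def IsConvexBody {d : ℕ} (K : Set (EuclideanSpace ℝ (Fin d))) : Prop :=
  IsCompact K ∧ Convex ℝ K ∧ (interior K).Nonempty

def StrictlyConvexBody {d : ℕ} (K : Set (EuclideanSpace ℝ (Fin d))) : Prop :=
  ∀ x ∈ frontier K, ∀ y ∈ frontier K, x ≠ y → ¬ (segment ℝ x y ⊆ frontier K)

def CongTR {d : ℕ} (A B : Set (EuclideanSpace ℝ (Fin d))) : Prop :=
  ∃ v : EuclideanSpace ℝ (Fin d), B = (v + ·) '' A ∨ B = (v + ·) '' (-A)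

def LC {d : ℕ} (K H : Set (EuclideanSpace ℝ (Fin d))) : Prop :=
  (∀ p ∈ frontier K, ∃ q ∈ frontier H, ∃ ε > 0,
     CongTR (K ∩ Metric.closedBall p ε) (H ∩ Metric.closedBall q ε)) ∧
  (∀ q ∈ frontier H, ∃ p ∈ frontier K, ∃ ε > 0,
     CongTR (H ∩ Metric.closedBall q ε) (K ∩ Metric.closedBall p ε))

set_option maxHeartbeats 1000000 in
theorem cross_covariogram_at_vertex (d : ℕ) (v : Fin (d + 1) → EuclideanSpace ℝ (Fin d))
    (hv : AffineIndependent ℝ v) (T : Set (EuclideanSpace ℝ (Fin d)))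
    (hT : T = convexHull ℝ (Set.range v))
    (i : Fin (d + 1)) (p : EuclideanSpace ℝ (Fin d)) (hp : p = v i)
    (u : EuclideanSpace ℝ (Fin d)) (hu : ‖u‖ = 1)
    (hin : ∃ ε₀ > 0, ∀ ε : ℝ, 0 < ε → ε < ε₀ → p - ε • u ∈ interior T) :
    ∃ C : ℝ, 0 ≤ C ∧ ∀ l : ℝ, 0 < l → l < 1 →
      ∃ t₀ > 0, ∀ t : ℝ, 0 < t → t < t₀ →
        (volume (((1 - l) • T) ∩ (((p - t • u) + ·) '' ((-l) • T)))).toReal = C * t ^ d := by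
  classical
  have htop : affineSpan ℝ (Set.range v) = ⊤ := by
    rw [hv.affineSpan_eq_top_iff_card_eq_finrank_add_one]
    simp [finrank_euclideanSpace]
  let b : AffineBasis (Fin (d+1)) ℝ (EuclideanSpace ℝ (Fin d)) := ⟨v, hv, htop⟩
  have hb : ⇑b = v := rfl
  set ℓ : Fin (d+1) → (EuclideanSpace ℝ (Fin d)) →ₗ[ℝ] ℝ := fun j => (b.coord j).linear with hℓ
  set c : Fin (d+1) → ℝ := fun j => b.coord j 0 with hc
  have hdec : ∀ j x, b.coord j x = ℓ j x + c j := by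
    intro j x
    have h := (b.coord j).map_vadd (0 : EuclideanSpace ℝ (Fin d)) x
    rw [vadd_eq_add, add_zero, vadd_eq_add] at h
    exact h
  have hsumc : ∑ j, c j = 1 := by
    simpa [hc] using b.sum_coord_apply_eq_one (0 : EuclideanSpace ℝ (Fin d))
  have hsum : ∀ x, ∑ j, ℓ j x = 0 := by
    intro x
    have h1 := b.sum_coord_apply_eq_one x
    simp only [hdec, Finset.sum_add_distrib, hsumc] at h1
    linarith
  -- membership in T
  have hmemT : ∀ x, x ∈ T ↔ ∀ j, 0 ≤ ℓ j x + c j := by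
    intro x
    rw [hT, ← hb, b.convexHull_eq_nonneg_coord]
    simp only [Set.mem_setOf_eq, hdec]
  -- δ values
  have hℓp : ∀ j, ℓ j p + c j = if j = i then 1 else 0 := by
    intro j
    have h := b.coord_apply j i
    rw [hb, ← hp, hdec] at h
    exact h
  -- ℓ j u < 0 for j ≠ i
  have hℓu : ∀ j, j ≠ i → ℓ j u < 0 := by
    intro j hj
    obtain ⟨ε₀, hε₀, hinn⟩ := hin
    have hmem := hinn (ε₀/2) (by linarith) (by linarith)
    rw [hT, ← hb, b.interior_convexHull] at hmem
    have h := hmem j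
    rw [hdec] at h
    rw [map_sub, LinearMap.map_smul, smul_eq_mul] at h
    have h2 := hℓp j
    rw [if_neg hj] at h2
    nlinarith
  -- the λ-free set S
  set S : Set (EuclideanSpace ℝ (Fin d)) :=
    {w | ∀ j, j ≠ i → 0 ≤ ℓ j w ∧ ℓ j w ≤ -(ℓ j u)} with hS
  set B : ℝ := ∑ j ∈ Finset.univ.erase i, (-(ℓ j u)) with hB
  have hB0 : 0 ≤ B := by
    apply Finset.sum_nonneg
    intro j hj
    have := hℓu j (Finset.ne_of_mem_erase hj)
    linarith
  have hsplit : ∀ x, ℓ i x = -∑ j ∈ Finset.univ.erase i, ℓ j x := by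
    intro x
    have := Finset.add_sum_erase Finset.univ (fun j => ℓ j x) (Finset.mem_univ i)
    have h2 := hsum x
    linarith
  have hℓiu : ℓ i u = B := by
    rw [hsplit u, hB, ← Finset.sum_neg_distrib]
  have hSbound : ∀ w ∈ S, -B ≤ ℓ i w ∧ ℓ i w ≤ 0 := by
    intro w hw
    have h1 : ∑ j ∈ Finset.univ.erase i, ℓ j w ≤ B := by
      apply Finset.sum_le_sum
      intro j hj
      exact (hw j (Finset.ne_of_mem_erase hj)).2
    have h2 : 0 ≤ ∑ j ∈ Finset.univ.erase i, ℓ j w := by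
      apply Finset.sum_nonneg
      intro j hj
      exact (hw j (Finset.ne_of_mem_erase hj)).1
    rw [hsplit w]
    constructor <;> linarith
  refine ⟨(volume S).toReal, ENNReal.toReal_nonneg, ?_⟩
  intro l hl0 hl1
  have h1l : (0:ℝ) < 1 - l := by linarith
  refine ⟨min (1-l) l / (B+1), by positivity, ?_⟩
  intro t ht0 htt₀
  have ht : t ≠ 0 := ne_of_gt ht0
  have htB : t * (B+1) < min (1-l) l := (lt_div_iff₀ (by linarith)).mp htt₀
  have htB1 : t * B < 1 - l := by
    have := min_le_left (1-l) l
    nlinarith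
  have htB2 : t * B < l := by
    have := min_le_right (1-l) l
    nlinarith
  set q : EuclideanSpace ℝ (Fin d) := (1-l) • p with hq
  have heq : ((1 - l) • T) ∩ (((p - t • u) + ·) '' ((-l) • T)) = (q + ·) '' (t • S) := by
    ext x
    set w : EuclideanSpace ℝ (Fin d) := t⁻¹ • (x - q) with hwdef
    have hxw : x = q + t • w := by
      rw [hwdef, smul_smul, mul_inv_cancel₀ ht, one_smul]
      abel
    have hrhs : x ∈ (q + ·) '' (t • S) ↔ w ∈ S := by
      rw [Set.image_add_left, Set.mem_preimage,
        Set.mem_smul_set_iff_inv_smul_mem₀ ht]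
      rw [hwdef]
      constructor <;> intro h <;> [skip; skip] <;>
        · convert h using 2
          abel
    rw [hrhs]
    have hℓx : ∀ j, ℓ j x = (1-l) * (ℓ j p) + t * ℓ j w := by
      intro j
      rw [hxw, hq]
      simp [map_add, LinearMap.map_smul, smul_eq_mul]
    -- condition A
    have hA : x ∈ (1 - l) • T ↔ ∀ j, 0 ≤ (1-l) * (if j = i then 1 else 0) + t * ℓ j w := by
      rw [Set.mem_smul_set_iff_inv_smul_mem₀ (ne_of_gt h1l), hmemT]
      apply forall_congr'
      intro j
      have h2 := hℓp j
      have e : ℓ j ((1-l)⁻¹ • x) + c j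
          = ((1-l) * (if j = i then 1 else 0) + t * ℓ j w) / (1-l) := by
        rw [LinearMap.map_smul, smul_eq_mul, hℓx j]
        by_cases hj : j = i
        · rw [if_pos hj] at h2 ⊢
          field_simp
          linear_combination (1-l) * h2
        · rw [if_neg hj] at h2 ⊢
          field_simp
          linear_combination (1-l) * h2
      rw [e, le_div_iff₀ h1l, zero_mul]
    -- condition B
    have hB' : x ∈ ((p - t • u) + ·) '' ((-l) • T) ↔
        ∀ j, t * (ℓ j w + ℓ j u) ≤ l * (if j = i then 1 else 0) := by
      rw [Set.image_add_left, Set.mem_preimage,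
        Set.mem_smul_set_iff_inv_smul_mem₀ (by intro h; nlinarith [neg_eq_zero.mp h] : (-l : ℝ) ≠ 0), hmemT]
      apply forall_congr'
      intro j
      have h2 := hℓp j
      have e : ℓ j ((-l)⁻¹ • (-(p - t • u) + x)) + c j
          = (l * (if j = i then 1 else 0) - t * (ℓ j w + ℓ j u)) / l := by
        rw [LinearMap.map_smul, smul_eq_mul]
        simp only [map_add, map_neg, map_sub, LinearMap.map_smul, smul_eq_mul]
        rw [hℓx j]
        by_cases hj : j = i
        · rw [if_pos hj] at h2 ⊢
          rw [inv_neg]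
          field_simp
          linear_combination l * h2
        · rw [if_neg hj] at h2 ⊢
          rw [inv_neg]
          field_simp
          linear_combination l * h2
      rw [e, le_div_iff₀ hl0, zero_mul, sub_nonneg]
    rw [Set.mem_inter_iff, hA, hB']
    constructor
    · rintro ⟨ha, hb'⟩ j hj
      have ha' := ha j
      have hb'' := hb' j
      rw [if_neg hj] at ha' hb''
      constructor
      · nlinarith
      · nlinarith
    · intro hw
      obtain ⟨hlb, hub⟩ := hSbound w hw
      constructor
      · intro j
        by_cases hj : j = i
        · rw [if_pos hj, hj]
          have h3 : 0 ≤ t * (ℓ i w + B) := mul_nonneg ht0.le (by linarith)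
          nlinarith
        · rw [if_neg hj]
          have := (hw j hj).1
          nlinarith
      · intro j
        by_cases hj : j = i
        · rw [if_pos hj, hj]
          have h3 : t * (ℓ i w + ℓ i u) ≤ t * B :=
            mul_le_mul_of_nonneg_left (by rw [hℓiu]; linarith) ht0.le
          linarith
        · rw [if_neg hj]
          have := (hw j hj).2
          nlinarith
  rw [heq, Set.image_add_left, measure_preimage_add, Measure.addHaar_smul,
    finrank_euclideanSpace, Fintype.card_fin, ENNReal.toReal_mul, ENNReal.toReal_ofReal (abs_nonneg _),
    abs_of_pos (pow_pos ht0 d)]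
  ring
end

section
/- Let T ⊆ ℝ^d be a d-dimensional simplex, let I be an edge of T (the convex hull of two of its vertices), let p be the midpoint of I, and let u be a unit vector such that p − εu lies in the interior of T for all sufficiently small ε > 0. Then there exists a constant C ≥ 0, depending only on T, I and u, such that for every λ ∈ (0,1), vol( ((1−λ)T) ∩ ( (−λT) + p − t u ) ) = C · min{λ, 1−λ} · t^{d−1} + o(t^{d−1}) as t → 0⁺. -/
open MeasureTheory Pointwise

open MeasureTheory Pointwise Set
section MAIN
variable {d : ℕ}

lemma inv_aux {c A b : ℝ} (hc : 0 < c) : 0 ≤ c⁻¹ * A + b ↔ 0 ≤ A + c * b := by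
  have e : c * (c⁻¹ * A + b) = A + c * b := by field_simp
  constructor
  · intro h; have := mul_nonneg hc.le h; rwa [e] at this
  · intro h
    have h2 : 0 ≤ c⁻¹ * (A + c * b) := mul_nonneg (inv_nonneg.mpr hc.le) h
    have e2 : c⁻¹ * (A + c * b) = c⁻¹ * A + b := by field_simp
    rwa [e2] at h2


section coords
variable (B : AffineBasis (Fin (d+1)) ℝ (EuclideanSpace ℝ (Fin d)))

lemma coord_add (k : Fin (d+1)) (y z : EuclideanSpace ℝ (Fin d)) :
    B.coord k (y + z) = (B.coord k).linear y + B.coord k z := by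
  simpa using (B.coord k).map_vadd z y

lemma coord_lin (k : Fin (d+1)) (y : EuclideanSpace ℝ (Fin d)) :
    B.coord k y = (B.coord k).linear y + B.coord k 0 := by
  simpa using coord_add B k y 0

lemma coord_smul (k : Fin (d+1)) (s : ℝ) (y : EuclideanSpace ℝ (Fin d)) :
    B.coord k (s • y) = s * (B.coord k).linear y + B.coord k 0 := by
  rw [coord_lin B k (s • y), LinearMap.map_smul, smul_eq_mul]

/-- membership characterization of the deformed intersection -/
lemma mem_inter_iff (T : Set (EuclideanSpace ℝ (Fin d)))
    (hT : T = convexHull ℝ (Set.range ⇑B))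
    (l : ℝ) (hl0 : 0 < l) (hl1 : l < 1) (x y : EuclideanSpace ℝ (Fin d)) :
    (y ∈ ((1 - l) • T) ∩ ((x + ·) '' ((-l) • T))) ↔
      ∀ k, l * B.coord k 0 ≤ B.coord k y ∧
        B.coord k y ≤ B.coord k x + l * B.coord k 0 := by
  have hmemT : ∀ z, z ∈ T ↔ ∀ k, 0 ≤ B.coord k z := by
    intro z; rw [hT, B.convexHull_eq_nonneg_coord]; rfl
  have h1l : (0:ℝ) < 1 - l := by linarith
  have h2 : y ∈ (1 - l) • T ↔ ∀ k, l * B.coord k 0 ≤ B.coord k y := by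
    rw [mem_smul_set_iff_inv_smul_mem₀ (ne_of_gt h1l), hmemT]
    refine forall_congr' fun k => ?_
    rw [coord_smul, inv_aux h1l, coord_lin B k y]
    constructor <;> intro hh <;> linarith [hh]
  have h3 : y ∈ ((x + ·) '' ((-l) • T)) ↔
      ∀ k, B.coord k y ≤ B.coord k x + l * B.coord k 0 := by
    have hstep : y ∈ ((x + ·) '' ((-l) • T)) ↔ y - x ∈ (-l) • T := by
      constructor
      · rintro ⟨w, hw, rfl⟩; simpa using hw
      · intro hw; exact ⟨y - x, hw, by module⟩
    rw [hstep, mem_smul_set_iff_inv_smul_mem₀ (by simpa using ne_of_gt hl0), hmemT]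
    refine forall_congr' fun k => ?_
    have hyx : (B.coord k).linear (y - x) = (B.coord k).linear y - (B.coord k).linear x :=
      map_sub _ _ _
    rw [coord_smul, hyx]
    have hflip : (-l)⁻¹ * ((B.coord k).linear y - (B.coord k).linear x)
        = l⁻¹ * ((B.coord k).linear x - (B.coord k).linear y) := by
      rw [inv_neg]; ring
    rw [hflip, inv_aux hl0, coord_lin B k y, coord_lin B k x]
    constructor <;> intro hh <;> linarith [hh]
  rw [Set.mem_inter_iff, h2, h3, ← forall_and]
end coords


/-- The linear map sending `w` to `∑ m, w m • (v (j.succAbove m) - v j)`. -/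
noncomputable def Mmap (v : Fin (d+1) → EuclideanSpace ℝ (Fin d)) (j : Fin (d+1)) :
    EuclideanSpace ℝ (Fin d) →ₗ[ℝ] EuclideanSpace ℝ (Fin d) :=
  ∑ m : Fin d, (EuclideanSpace.projₗ m).smulRight (v (j.succAbove m) - v j)

lemma Mmap_apply (v : Fin (d+1) → EuclideanSpace ℝ (Fin d)) (j : Fin (d+1))
    (w : EuclideanSpace ℝ (Fin d)) :
    Mmap v j w = ∑ m : Fin d, w m • (v (j.succAbove m) - v j) := by
  simp [Mmap]

section Phi
variable (B : AffineBasis (Fin (d+1)) ℝ (EuclideanSpace ℝ (Fin d))) (j : Fin (d+1))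

lemma coord_add' (k : Fin (d+1)) (y z : EuclideanSpace ℝ (Fin d)) :
    B.coord k (y + z) = (B.coord k).linear y + B.coord k z := by
  simpa using (B.coord k).map_vadd z y

lemma coord_Phi (k : Fin (d+1)) (w : EuclideanSpace ℝ (Fin d)) :
    B.coord k (B j + Mmap (⇑B) j w)
      = (if k = j then 1 else 0) + ∑ m' : Fin d, w m' *
          ((if k = j.succAbove m' then 1 else 0) - (if k = j then 1 else 0)) := by
  rw [show B j + Mmap (⇑B) j w = Mmap (⇑B) j w + B j from add_comm _ _, coord_add']
  rw [add_comm ((B.coord k).linear _)]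
  congr 1
  · simp [AffineBasis.coord_apply]
  · rw [Mmap_apply, map_sum]
    refine Finset.sum_congr rfl fun m' _ => ?_
    rw [LinearMap.map_smul, smul_eq_mul]
    congr 1
    have h2 := (B.coord k).map_vadd (B j) (B (j.succAbove m') - B j)
    simp only [vadd_eq_add, sub_add_cancel] at h2
    have h3 : (B.coord k).linear (B (j.succAbove m') - B j)
        = B.coord k (B (j.succAbove m')) - B.coord k (B j) := by
      rw [h2]; ring
    rw [h3]
    simp [AffineBasis.coord_apply]

lemma coord_Phi_succAbove (w : EuclideanSpace ℝ (Fin d)) (m : Fin d) :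
    B.coord (j.succAbove m) (B j + Mmap (⇑B) j w) = w m := by
  rw [coord_Phi]
  simp only [Fin.succAbove_right_injective.eq_iff, Fin.succAbove_ne j _, if_false, zero_add]
  rw [Finset.sum_congr rfl (fun m' _ => by rw [sub_zero])]
  simp [Finset.sum_ite_eq' Finset.univ m (fun m' => w m'), eq_comm]

lemma coord_Phi_j (w : EuclideanSpace ℝ (Fin d)) :
    B.coord j (B j + Mmap (⇑B) j w) = 1 - ∑ m : Fin d, w m := by
  rw [coord_Phi]
  have hne : ∀ m' : Fin d, (if j = j.succAbove m' then (1:ℝ) else 0) = 0 :=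
    fun m' => if_neg (fun h => (Fin.succAbove_ne j m') h.symm)
  simp only [hne, eq_self_iff_true, if_true]
  rw [Finset.sum_congr rfl (fun m' _ => show w m' * ((0:ℝ) - 1) = -(w m') by ring),
    Finset.sum_neg_distrib]
  ring

lemma Phi_surj (y : EuclideanSpace ℝ (Fin d)) :
    ∃ w : EuclideanSpace ℝ (Fin d), B j + Mmap (⇑B) j w = y := by
  refine ⟨WithLp.toLp 2 (fun m => B.coord (j.succAbove m) y : Fin d → ℝ), B.ext_elem fun k => ?_⟩
  rcases eq_or_ne k j with rfl | hk
  · rw [coord_Phi_j]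
    simp only [PiLp.toLp_apply]
    have := B.sum_coord_apply_eq_one y
    rw [Fin.sum_univ_succAbove (fun k' => B.coord k' y) k] at this
    linarith [this]
  · obtain ⟨m, rfl⟩ := Fin.exists_succAbove_eq hk
    rw [coord_Phi_succAbove]
end Phi


lemma volume_translate_linear (a : EuclideanSpace ℝ (Fin d))
    (M : EuclideanSpace ℝ (Fin d) →ₗ[ℝ] EuclideanSpace ℝ (Fin d))
    (A : Set (EuclideanSpace ℝ (Fin d))) :
    volume ((fun w => a + M w) '' A)
      = ENNReal.ofReal |LinearMap.det M| * volume A := by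
  have h1 : (fun w => a + M w) '' A = (a + ·) '' (M '' A) := by
    rw [Set.image_image]
  rw [h1]
  have h2 : (a + ·) '' (M '' A) = (fun x => -a + x) ⁻¹' (M '' A) := by
    ext z
    constructor
    · rintro ⟨w, hw, rfl⟩; simpa using hw
    · intro hz
      exact ⟨-a + z, hz, by module⟩
  rw [h2, measure_preimage_add, Measure.addHaar_image_linearMap]

lemma volume_box (lo hi : Fin d → ℝ) :
    volume {w : EuclideanSpace ℝ (Fin d) | ∀ m, lo m ≤ w m ∧ w m ≤ hi m}
      = ∏ m, ENNReal.ofReal (hi m - lo m) := by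
  have h1 : {w : EuclideanSpace ℝ (Fin d) | ∀ m, lo m ≤ w m ∧ w m ≤ hi m}
      = (MeasurableEquiv.toLp 2 (Fin d → ℝ)).symm ⁻¹' (Set.Icc lo hi) := by
    ext w
    simp only [Set.mem_setOf_eq, Set.mem_preimage, Set.mem_Icc, Pi.le_def]
    constructor
    · intro h; exact ⟨fun m => (h m).1, fun m => (h m).2⟩
    · intro h m; exact ⟨h.1 m, h.2 m⟩
  rw [h1, (EuclideanSpace.volume_preserving_symm_measurableEquiv_toLp (Fin d)).measure_preimage
    measurableSet_Icc.nullMeasurableSet]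
  exact Real.volume_Icc_pi


section helpers

lemma forall_succAbove_iff (j : Fin (d+1)) (Q : Fin (d+1) → Prop) :
    (∀ k, Q k) ↔ Q j ∧ ∀ m, Q (j.succAbove m) := by
  constructor
  · intro h; exact ⟨h j, fun m => h _⟩
  · rintro ⟨hj, hm⟩ k
    rcases eq_or_ne k j with rfl | hk
    · exact hj
    · obtain ⟨m, rfl⟩ := Fin.exists_succAbove_eq hk
      exact hm m

lemma abs_sub_sub_le (a b c d : ℝ) : |a - b - (c - d)| ≤ |a - c| + |b - d| := by
  have h : a - b - (c - d) = (a - c) - (b - d) := by ring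
  rw [h]
  exact abs_sub _ _

lemma toReal_ofReal_eq_max (a : ℝ) : (ENNReal.ofReal a).toReal = max a 0 := by
  rcases le_total a 0 with h | h
  · rw [ENNReal.ofReal_eq_zero.mpr h, max_eq_right h]; rfl
  · rw [ENNReal.toReal_ofReal h, max_eq_left h]

end helpers

set_option maxHeartbeats 1000000 in
open Asymptotics in
theorem cross_covariogram_at_edge_midpoint (d : ℕ)
    (v : Fin (d + 1) → EuclideanSpace ℝ (Fin d))
    (hv : AffineIndependent ℝ v) (T : Set (EuclideanSpace ℝ (Fin d)))
    (hT : T = convexHull ℝ (Set.range v))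
    (i j : Fin (d + 1)) (hij : i ≠ j)
    (p : EuclideanSpace ℝ (Fin d)) (hp : p = midpoint ℝ (v i) (v j))
    (u : EuclideanSpace ℝ (Fin d)) (hu : ‖u‖ = 1)
    (hin : ∃ ε₀ > 0, ∀ ε : ℝ, 0 < ε → ε < ε₀ → p - ε • u ∈ interior T) :
    ∃ C : ℝ, 0 ≤ C ∧ ∀ l : ℝ, 0 < l → l < 1 →
      (fun t : ℝ =>
          (volume (((1 - l) • T) ∩ (((p - t • u) + ·) '' ((-l) • T)))).toReal
            - C * min l (1 - l) * t ^ (d - 1)) =o[nhdsWithin 0 (Set.Ioi 0)]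
        fun t : ℝ => t ^ (d - 1) := by
  classical
  obtain ⟨mi, hmi⟩ := Fin.exists_succAbove_eq hij
  have hd : 0 < d := mi.pos
  have hcard : Fintype.card (Fin (d+1)) = Module.finrank ℝ (EuclideanSpace ℝ (Fin d)) + 1 := by
    simp [finrank_euclideanSpace_fin]
  have htot : affineSpan ℝ (Set.range v) = ⊤ :=
    hv.affineSpan_eq_top_iff_card_eq_finrank_add_one.mpr hcard
  set B : AffineBasis (Fin (d+1)) ℝ (EuclideanSpace ℝ (Fin d)) := ⟨v, hv, htot⟩ with hB
  have hBv : ⇑B = v := rfl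
  set b : Fin (d+1) → ℝ := fun k => B.coord k 0 with hbdef
  set c : Fin (d+1) → ℝ := fun k => -((B.coord k).linear u) with hcdef
  -- coordinates of p
  have hmidR : ∀ a b' : ℝ, midpoint ℝ a b' = (a + b') / 2 := by
    intro a b'
    rw [midpoint_eq_smul_add, invOf_eq_inv, smul_eq_mul, inv_eq_one_div]
    ring
  have hqp : ∀ k, B.coord k p
      = ((if k = i then (1:ℝ) else 0) + (if k = j then (1:ℝ) else 0)) / 2 := by
    intro k
    rw [hp, ← hBv, (B.coord k).map_midpoint, hmidR]
    simp [AffineBasis.coord_apply]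
  have hqi : B.coord i p = 1/2 := by rw [hqp]; simp [hij]
  have hqj : B.coord j p = 1/2 := by rw [hqp]; simp [Ne.symm hij]
  have hq0 : ∀ m : Fin d, m ≠ mi → B.coord (j.succAbove m) p = 0 := by
    intro m hm
    rw [hqp]
    have h1 : j.succAbove m ≠ i := by
      rw [← hmi]; exact fun h => hm (Fin.succAbove_right_injective h)
    have h2 : j.succAbove m ≠ j := Fin.succAbove_ne j m
    simp [h1, h2]
  -- coordinates of p - t u
  have hxt : ∀ (t : ℝ) (k), B.coord k (p - t • u) = B.coord k p + t * c k := by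
    intro t k
    have h1 : p - t • u = (-(t • u)) + p := by module
    rw [h1, coord_add', map_neg, LinearMap.map_smul, smul_eq_mul, hcdef]
    ring
  -- nonnegativity of small coefficients
  have hmemT : ∀ z, z ∈ T ↔ ∀ k, 0 ≤ B.coord k z := by
    intro z; rw [hT, ← hBv, B.convexHull_eq_nonneg_coord]; rfl
  have hcnn : ∀ m : Fin d, m ≠ mi → 0 ≤ c (j.succAbove m) := by
    intro m hm
    obtain ⟨ε₀, hε₀, hε⟩ := hin
    have hmem : p - (ε₀/2) • u ∈ T :=
      interior_subset (hε (ε₀/2) (by linarith) (by linarith))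
    have h0 := (hmemT _).mp hmem (j.succAbove m)
    rw [hxt, hq0 m hm, zero_add] at h0
    by_contra hcon
    push_neg at hcon
    nlinarith [mul_pos (half_pos hε₀) (neg_pos.mpr hcon)]
  -- index bookkeeping sums
  set SB : ℝ := ∑ m ∈ Finset.univ.erase mi, b (j.succAbove m) with hSBdef
  set Cs : ℝ := ∑ m ∈ Finset.univ.erase mi, c (j.succAbove m) with hCsdef
  set P : ℝ := ∏ m ∈ Finset.univ.erase mi, c (j.succAbove m) with hPdef
  have hCs : 0 ≤ Cs := Finset.sum_nonneg fun m hm => hcnn m (Finset.ne_of_mem_erase hm)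
  have hP : 0 ≤ P := Finset.prod_nonneg fun m hm => hcnn m (Finset.ne_of_mem_erase hm)
  have hsum1 : b i + b j + SB = 1 := by
    have h1 := B.sum_coord_apply_eq_one (0 : EuclideanSpace ℝ (Fin d))
    rw [Fin.sum_univ_succAbove (fun k => B.coord k 0) j] at h1
    have h2 : ∑ m : Fin d, B.coord (j.succAbove m) 0
        = B.coord (j.succAbove mi) 0 + SB := by
      rw [hSBdef, ← Finset.add_sum_erase Finset.univ _ (Finset.mem_univ mi)]
    rw [h2, hmi] at h1
    rw [hbdef]
    linarith
  set Dt : ℝ := |LinearMap.det (Mmap v j)| with hDtdef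
  have hDt : 0 ≤ Dt := abs_nonneg _
  set K : ℝ := |c i| + |c j| + Cs with hKdef
  have hK : 0 ≤ K := by positivity
  refine ⟨Dt * P, mul_nonneg hDt hP, ?_⟩
  intro l hl0 hl1
  set mn := min l (1 - l) with hmndef
  have hmn0 : 0 ≤ mn := le_min hl0.le (by linarith)
  -- the key pointwise bound
  have hbound : ∀ t : ℝ, 0 < t →
      |(volume (((1 - l) • T) ∩ (((p - t • u) + ·) '' ((-l) • T)))).toReal
        - Dt * P * mn * t ^ (d - 1)| ≤ (Dt * P * K) * (t ^ (d-1) * t) := by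
    intro t ht0
    set x := p - t • u with hxdef
    set S := ((1 - l) • T) ∩ ((x + ·) '' ((-l) • T)) with hSdef
    set E := (fun w => v j + Mmap v j w) ⁻¹' S with hEdef
    have hsurj : Function.Surjective (fun w => v j + Mmap v j w) := fun y => Phi_surj B j y
    have hSE : S = (fun w => v j + Mmap v j w) '' E := (Set.image_preimage_eq S hsurj).symm
    -- coordinates of x
    have hxci : B.coord i x = 1/2 + t * c i := by rw [hxdef, hxt, hqi]
    have hxcj : B.coord j x = 1/2 + t * c j := by rw [hxdef, hxt, hqj]
    have hxcm : ∀ m : Fin d, m ≠ mi → B.coord (j.succAbove m) x = t * c (j.succAbove m) := by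
      intro m hm; rw [hxdef, hxt, hq0 m hm, zero_add]
    -- membership characterization of E
    have hmemE : ∀ w : EuclideanSpace ℝ (Fin d), w ∈ E ↔
        ((l * b j ≤ 1 - ∑ m : Fin d, w m ∧
            1 - ∑ m : Fin d, w m ≤ B.coord j x + l * b j) ∧
          ∀ m : Fin d, l * b (j.succAbove m) ≤ w m ∧
            w m ≤ B.coord (j.succAbove m) x + l * b (j.succAbove m)) := by
      intro w
      rw [hEdef, Set.mem_preimage, hSdef,
        mem_inter_iff B T (by rw [← hBv] at hT; exact hT) l hl0 hl1 x _,
        forall_succAbove_iff j]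
      rw [← hBv]
      simp only [coord_Phi_j B j, coord_Phi_succAbove B j, hbdef]
    -- real constants
    have hsumw : ∀ w : EuclideanSpace ℝ (Fin d),
        ∑ m : Fin d, w m = w mi + ∑ m ∈ Finset.univ.erase mi, w m :=
      fun w => (Finset.add_sum_erase _ _ (Finset.mem_univ mi)).symm
    set Ai : ℝ := l * b i with hAidef
    set Bi : ℝ := l * b i + (1/2 + t * c i) with hBidef
    set Aj : ℝ := 1 - l * b j - (1/2 + t * c j) - l * SB with hAjdef
    set Bjm : ℝ := 1 - l * b j - l * SB - t * Cs with hBjmdef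
    set Bjp : ℝ := 1 - l * b j - l * SB with hBjpdef
    set lom : Fin d → ℝ := fun m => if m = mi then max Ai Aj else l * b (j.succAbove m) with hlomdef
    set him : Fin d → ℝ := fun m => if m = mi then min Bi Bjm
      else l * b (j.succAbove m) + t * c (j.succAbove m) with hhimdef
    set lop : Fin d → ℝ := fun m => if m = mi then max Ai (Aj - t * Cs)
      else l * b (j.succAbove m) with hlopdef
    set hip : Fin d → ℝ := fun m => if m = mi then min Bi Bjp
      else l * b (j.succAbove m) + t * c (j.succAbove m) with hhipdef
    -- sum bounds over the small coordinates
    have hsum_lo : ∀ w : EuclideanSpace ℝ (Fin d),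
        (∀ m : Fin d, m ≠ mi → l * b (j.succAbove m) ≤ w m) →
        l * SB ≤ ∑ m ∈ Finset.univ.erase mi, w m := by
      intro w hw
      rw [hSBdef, Finset.mul_sum]
      exact Finset.sum_le_sum fun m hm => hw m (Finset.ne_of_mem_erase hm)
    have hsum_hi : ∀ w : EuclideanSpace ℝ (Fin d),
        (∀ m : Fin d, m ≠ mi → w m ≤ l * b (j.succAbove m) + t * c (j.succAbove m)) →
        ∑ m ∈ Finset.univ.erase mi, w m ≤ l * SB + t * Cs := by
      intro w hw
      rw [hSBdef, hCsdef, Finset.mul_sum, Finset.mul_sum, ← Finset.sum_add_distrib]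
      exact Finset.sum_le_sum fun m hm => hw m (Finset.ne_of_mem_erase hm)
    -- box inclusions
    have hincl1 : {w : EuclideanSpace ℝ (Fin d) | ∀ m, lom m ≤ w m ∧ w m ≤ him m} ⊆ E := by
      intro w hw
      have hwm : ∀ m : Fin d, m ≠ mi →
          l * b (j.succAbove m) ≤ w m ∧ w m ≤ l * b (j.succAbove m) + t * c (j.succAbove m) := by
        intro m hm
        have := hw m
        rw [hlomdef, hhimdef] at this
        simpa [hm] using this
      have hwi := hw mi
      rw [hlomdef, hhimdef] at hwi
      simp only [if_pos rfl] at hwi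
      have h1 := hsum_lo w (fun m hm => (hwm m hm).1)
      have h2 := hsum_hi w (fun m hm => (hwm m hm).2)
      rw [hmemE]
      refine ⟨⟨?_, ?_⟩, ?_⟩
      · rw [hsumw w]
        have := le_trans hwi.2 (min_le_right _ _)
        rw [hBjmdef] at this
        linarith
      · rw [hsumw w, hxcj]
        have := le_trans (le_max_right Ai Aj) hwi.1
        rw [hAjdef] at this
        linarith
      · intro m
        rcases eq_or_ne m mi with rfl | hm
        · constructor
          · rw [hmi, ← hAidef]; exact le_trans (le_max_left _ _) hwi.1
          · rw [hmi, hxci]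
            have h5 := le_trans hwi.2 (min_le_left Bi Bjm)
            rw [hBidef] at h5
            linarith
        · rw [hxcm m hm]
          exact ⟨(hwm m hm).1, by linarith [(hwm m hm).2]⟩
    have hincl2 : E ⊆ {w : EuclideanSpace ℝ (Fin d) | ∀ m, lop m ≤ w m ∧ w m ≤ hip m} := by
      intro w hw
      rw [hmemE] at hw
      obtain ⟨⟨hj1, hj2⟩, hm⟩ := hw
      have h1 := hsum_lo w (fun m' hm' => (hm m').1)
      have h2 := hsum_hi w (fun m' hm' => by
        have := (hm m').2
        rw [hxcm m' hm'] at this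
        linarith)
      have hii1 := (hm mi).1
      have hii2 := (hm mi).2
      rw [hmi] at hii1 hii2
      rw [hxci] at hii2
      rw [hxcj] at hj2
      rw [hsumw w] at hj1 hj2
      intro m
      rcases eq_or_ne m mi with rfl | hmne
      · rw [hlopdef, hhipdef]
        simp only [if_pos rfl]
        constructor
        · apply max_le
          · rw [hAidef]; exact hii1
          · rw [hAjdef]; linarith
        · apply le_min
          · rw [hBidef]; linarith
          · rw [hBjpdef]; linarith
      · rw [hlopdef, hhipdef]
        simp only [hmne, if_false]
        have := hm m
        rw [hxcm m hmne] at this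
        exact ⟨this.1, by linarith [this.2]⟩
    -- volumes of boxes
    have hvolbox : ∀ lo hi : Fin d → ℝ,
        (∀ m : Fin d, m ≠ mi → hi m - lo m = t * c (j.succAbove m)) →
        volume {w : EuclideanSpace ℝ (Fin d) | ∀ m, lo m ≤ w m ∧ w m ≤ hi m}
          = ENNReal.ofReal (hi mi - lo mi) * ENNReal.ofReal (t ^ (d-1) * P) := by
      intro lo hi hdiff
      rw [volume_box lo hi, ← Finset.mul_prod_erase Finset.univ _ (Finset.mem_univ mi)]
      congr 1
      have e1 : ∀ m ∈ Finset.univ.erase mi,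
          ENNReal.ofReal (hi m - lo m) = ENNReal.ofReal (t * c (j.succAbove m)) :=
        fun m hm => by rw [hdiff m (Finset.ne_of_mem_erase hm)]
      rw [Finset.prod_congr rfl e1,
        ← ENNReal.ofReal_prod_of_nonneg
          (fun m hm => mul_nonneg ht0.le (hcnn m (Finset.ne_of_mem_erase hm)))]
      congr 1
      rw [Finset.prod_mul_distrib, Finset.prod_const, hPdef]
      congr 2
      rw [Finset.card_erase_of_mem (Finset.mem_univ mi), Finset.card_univ, Fintype.card_fin]
    have hvol1 : volume {w : EuclideanSpace ℝ (Fin d) | ∀ m, lom m ≤ w m ∧ w m ≤ him m}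
        = ENNReal.ofReal (min Bi Bjm - max Ai Aj) * ENNReal.ofReal (t ^ (d-1) * P) := by
      rw [hvolbox lom him (fun m hm => by simp only [hlomdef, hhimdef, hm, if_false]; ring)]
      simp [hlomdef, hhimdef]
    have hvol2 : volume {w : EuclideanSpace ℝ (Fin d) | ∀ m, lop m ≤ w m ∧ w m ≤ hip m}
        = ENNReal.ofReal (min Bi Bjp - max Ai (Aj - t * Cs)) * ENNReal.ofReal (t ^ (d-1) * P) := by
      rw [hvolbox lop hip (fun m hm => by simp only [hlopdef, hhipdef, hm, if_false]; ring)]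
      simp [hlopdef, hhipdef]
    -- length estimates
    set lenm : ℝ := min Bi Bjm - max Ai Aj with hlenmdef
    set lenp : ℝ := min Bi Bjp - max Ai (Aj - t * Cs) with hlenpdef
    have hlen0 : min (l * b i + 1/2) (1 - l * b j - l * SB)
        - max (l * b i) (1 - l * b j - 1/2 - l * SB) = mn := by
      have e1 : 1 - l * b j - l * SB = l * b i + (1 - l) := by linear_combination (-l) * hsum1
      have e2 : 1 - l * b j - 1/2 - l * SB = l * b i + (1/2 - l) := by
        linear_combination (-l) * hsum1
      rw [e1, e2, hmndef]
      rcases le_total l (1/2) with h | h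
      · rw [min_eq_left (by linarith), max_eq_right (by linarith), min_eq_left (by linarith)]
        ring
      · rw [min_eq_right (by linarith), max_eq_left (by linarith), min_eq_right (by linarith)]
        ring
    have habsi : |t * c i| = t * |c i| := by rw [abs_mul, abs_of_pos ht0]
    have habsj : |t * c j| = t * |c j| := by rw [abs_mul, abs_of_pos ht0]
    have habsCs : |t * Cs| = t * Cs := abs_of_nonneg (mul_nonneg ht0.le hCs)
    have hlm : |lenm - mn| ≤ K * t := by
      rw [← hlen0, hlenmdef]
      have h1 := abs_min_sub_min_le_max Bi Bjm (l * b i + 1/2) (1 - l * b j - l * SB)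
      have h2 := abs_max_sub_max_le_max Ai Aj (l * b i) (1 - l * b j - 1/2 - l * SB)
      have e3 : Bi - (l * b i + 1/2) = t * c i := by rw [hBidef]; ring
      have e4 : Bjm - (1 - l * b j - l * SB) = -(t * Cs) := by rw [hBjmdef]; ring
      have e5 : Ai - l * b i = 0 := by rw [hAidef]; ring
      have e6 : Aj - (1 - l * b j - 1/2 - l * SB) = -(t * c j) := by rw [hAjdef]; ring
      rw [e3, e4] at h1
      rw [e5, e6] at h2
      rw [abs_neg, habsi, habsCs] at h1
      rw [abs_neg, abs_zero, habsj] at h2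
      have h3 : max (t * |c i|) (t * Cs) ≤ t * |c i| + t * Cs :=
        max_le (le_add_of_nonneg_right (mul_nonneg ht0.le hCs))
          (le_add_of_nonneg_left (mul_nonneg ht0.le (abs_nonneg _)))
      have h4 : max 0 (t * |c j|) ≤ t * |c j| :=
        max_le (mul_nonneg ht0.le (abs_nonneg _)) le_rfl
      calc |min Bi Bjm - max Ai Aj
            - (min (l * b i + 1/2) (1 - l * b j - l * SB)
              - max (l * b i) (1 - l * b j - 1/2 - l * SB))|
          ≤ |min Bi Bjm - min (l * b i + 1/2) (1 - l * b j - l * SB)|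
            + |max Ai Aj - max (l * b i) (1 - l * b j - 1/2 - l * SB)| :=
            abs_sub_sub_le _ _ _ _
        _ ≤ K * t := by rw [hKdef]; linarith [h1.trans h3, h2.trans h4]
    have hlp : |lenp - mn| ≤ K * t := by
      rw [← hlen0, hlenpdef]
      have h1 := abs_min_sub_min_le_max Bi Bjp (l * b i + 1/2) (1 - l * b j - l * SB)
      have h2 := abs_max_sub_max_le_max Ai (Aj - t * Cs) (l * b i)
        (1 - l * b j - 1/2 - l * SB)
      have e3 : Bi - (l * b i + 1/2) = t * c i := by rw [hBidef]; ring
      have e4 : Bjp - (1 - l * b j - l * SB) = 0 := by rw [hBjpdef]; ring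
      have e5 : Ai - l * b i = 0 := by rw [hAidef]; ring
      have e6 : Aj - t * Cs - (1 - l * b j - 1/2 - l * SB) = -(t * c j) - t * Cs := by
        rw [hAjdef]; ring
      rw [e3, e4] at h1
      rw [e5, e6] at h2
      rw [abs_zero, habsi] at h1
      rw [abs_zero] at h2
      have h5 : |-(t * c j) - t * Cs| ≤ t * |c j| + t * Cs := by
        calc |-(t * c j) - t * Cs| ≤ |(-(t * c j))| + |t * Cs| := abs_sub _ _
          _ = t * |c j| + t * Cs := by rw [abs_neg, habsj, habsCs]
      have h3 : max (t * |c i|) 0 ≤ t * |c i| :=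
        max_le le_rfl (mul_nonneg ht0.le (abs_nonneg _))
      have h4 : max 0 (|-(t * c j) - t * Cs|) ≤ t * |c j| + t * Cs :=
        max_le (add_nonneg (mul_nonneg ht0.le (abs_nonneg _)) (mul_nonneg ht0.le hCs)) h5
      calc |min Bi Bjp - max Ai (Aj - t * Cs)
            - (min (l * b i + 1/2) (1 - l * b j - l * SB)
              - max (l * b i) (1 - l * b j - 1/2 - l * SB))|
          ≤ |min Bi Bjp - min (l * b i + 1/2) (1 - l * b j - l * SB)|
            + |max Ai (Aj - t * Cs) - max (l * b i) (1 - l * b j - 1/2 - l * SB)| :=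
            abs_sub_sub_le _ _ _ _
        _ ≤ K * t := by rw [hKdef]; linarith [h1.trans h3, h2.trans h4]
    have hlm0 : |max lenm 0 - mn| ≤ K * t := by
      have h1 := abs_max_sub_max_le_max lenm 0 mn 0
      rw [sub_zero, abs_zero, max_eq_left hmn0] at h1
      exact h1.trans (by simpa using hlm)
    have hlp0 : |max lenp 0 - mn| ≤ K * t := by
      have h1 := abs_max_sub_max_le_max lenp 0 mn 0
      rw [sub_zero, abs_zero, max_eq_left hmn0] at h1
      exact h1.trans (by simpa using hlp)
    -- volume chain
    set R : ℝ := t ^ (d-1) * P with hRdef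
    have hR : 0 ≤ R := mul_nonneg (pow_nonneg ht0.le _) hP
    have hv1 : (volume S).toReal = Dt * (volume E).toReal := by
      rw [hSE, volume_translate_linear (v j) (Mmap v j) E, ENNReal.toReal_mul,
        ENNReal.toReal_ofReal (abs_nonneg _), hDtdef]
    have hE1 : volume {w : EuclideanSpace ℝ (Fin d) | ∀ m, lom m ≤ w m ∧ w m ≤ him m}
        ≤ volume E := measure_mono hincl1
    have hE2 : volume E
        ≤ volume {w : EuclideanSpace ℝ (Fin d) | ∀ m, lop m ≤ w m ∧ w m ≤ hip m} :=
      measure_mono hincl2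
    have hfinp : volume {w : EuclideanSpace ℝ (Fin d) | ∀ m, lop m ≤ w m ∧ w m ≤ hip m}
        ≠ ⊤ := by
      rw [hvol2]
      exact ENNReal.mul_ne_top ENNReal.ofReal_ne_top ENNReal.ofReal_ne_top
    have hEfin : volume E ≠ ⊤ := fun h => hfinp (top_le_iff.mp (h ▸ hE2))
    have hXlo : max lenm 0 * R ≤ (volume E).toReal := by
      have := ENNReal.toReal_mono hEfin hE1
      rw [hvol1, ENNReal.toReal_mul, toReal_ofReal_eq_max, toReal_ofReal_eq_max,
        max_eq_left (mul_nonneg (pow_nonneg ht0.le _) hP)] at this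
      exact this
    have hXhi : (volume E).toReal ≤ max lenp 0 * R := by
      have := ENNReal.toReal_mono hfinp hE2
      rw [hvol2, ENNReal.toReal_mul, toReal_ofReal_eq_max, toReal_ofReal_eq_max,
        max_eq_left (mul_nonneg (pow_nonneg ht0.le _) hP)] at this
      exact this
    -- final arithmetic
    set X := (volume E).toReal with hXdef
    have h9 : |X - mn * R| ≤ K * t * R := by
      rw [abs_le]
      have hb1 := (abs_le.mp hlm0).1
      have hb2 := (abs_le.mp hlp0).2
      constructor
      · have q1 : (mn - K * t) * R ≤ max lenm 0 * R :=
          mul_le_mul_of_nonneg_right (by linarith) hR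
        have q2 := q1.trans hXlo
        rw [sub_mul] at q2
        linarith
      · have q1 : max lenp 0 * R ≤ (mn + K * t) * R :=
          mul_le_mul_of_nonneg_right (by linarith) hR
        have q2 := hXhi.trans q1
        rw [add_mul] at q2
        linarith
    rw [hv1]
    have h10 : Dt * X - Dt * P * mn * t ^ (d-1) = Dt * (X - mn * R) := by rw [hRdef]; ring
    rw [h10, abs_mul, abs_of_nonneg hDt]
    calc Dt * |X - mn * R| ≤ Dt * (K * t * R) := mul_le_mul_of_nonneg_left h9 hDt
      _ = Dt * P * K * (t ^ (d-1) * t) := by rw [hRdef]; ring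
  -- conclude littleO
  have hDPK : 0 ≤ Dt * P * K := mul_nonneg (mul_nonneg hDt hP) hK
  rw [Asymptotics.isLittleO_iff]
  intro ε hε
  have hmem : Set.Ioo (0:ℝ) (ε / (Dt * P * K + 1)) ∈ nhdsWithin 0 (Set.Ioi 0) := by
    apply Ioo_mem_nhdsGT_of_mem
    exact ⟨le_refl 0, div_pos hε (by linarith)⟩
  filter_upwards [hmem] with t ht
  have ht0 : 0 < t := ht.1
  have ht1 : t < ε / (Dt * P * K + 1) := ht.2
  have h1 := hbound t ht0
  have h2 : (Dt * P * K) * (t ^ (d-1) * t) ≤ ε * t ^ (d-1) := by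
    have hpow : (0:ℝ) ≤ t ^ (d-1) := pow_nonneg ht0.le _
    have : (Dt * P * K) * t ≤ ε := by
      have h4 := (le_div_iff₀ (by linarith : (0:ℝ) < Dt * P * K + 1)).mp ht1.le
      nlinarith
    nlinarith
  have h3 : ‖t ^ (d-1)‖ = t ^ (d-1) := by
    rw [Real.norm_eq_abs, abs_of_nonneg (pow_nonneg ht0.le _)]
  rw [Real.norm_eq_abs, h3]
  exact le_trans h1 h2
end MAIN
end

section
/- Let K be a convex body in ℝ^d and let x ∈ ℝ^d, x ≠ 0. Define K(x) = { y ∈ K : the 1-dimensional Hausdorff measure of K ∩ ℓ_y is at least |x| }, where ℓ_y is the line through y with direction x (i.e. K(x) is the union of all chords of K parallel to x of length at least |x|). Then K ∩ (K + x) = K(x) ∩ (K(x) + x); in particular vol(K(x) ∩ (K(x) + x)) = g_K(x). -/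
open MeasureTheory Pointwise

theorem covariogram_via_long_chords (d : ℕ) (K : Set (EuclideanSpace ℝ (Fin d)))
    (hK : IsConvexBody K) (x : EuclideanSpace ℝ (Fin d)) (hx : x ≠ 0)
    (Kx : Set (EuclideanSpace ℝ (Fin d)))
    (hKx : Kx = {y ∈ K | ENNReal.ofReal ‖x‖ ≤
        μH[1] (K ∩ Set.range fun t : ℝ => y + t • x)}) :
    K ∩ ((x + ·) '' K) = Kx ∩ ((x + ·) '' Kx) ∧ covar Kx x = covar K x := by
  have hKsub : Kx ⊆ K := by rw [hKx]; exact fun y hy => hy.1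
  -- key: if y ∈ K and y - x ∈ K then the chord condition holds at y
  have key : ∀ y z : EuclideanSpace ℝ (Fin d), y ∈ K → z ∈ K → y = x + z →
      ENNReal.ofReal ‖x‖ ≤ μH[1] (K ∩ Set.range fun t : ℝ => y + t • x) := by
    intro y z hy hz hyz
    have hseg : segment ℝ z y ⊆ K ∩ Set.range fun t : ℝ => y + t • x := by
      intro p hp
      refine ⟨(hK.2.1).segment_subset hz hy hp, ?_⟩
      obtain ⟨a, b, ha, hb, hab, rfl⟩ := hp
      refine ⟨b - 1, ?_⟩
      have hz' : z = y - x := by rw [hyz]; abel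
      have ha' : a = 1 - b := by linarith
      rw [hz', ha']
      simp only [smul_sub, sub_smul, one_smul]
      module
    calc ENNReal.ofReal ‖x‖ = edist z y := by
          rw [edist_dist, dist_eq_norm]
          congr 1
          rw [hyz]; simp [norm_sub_rev]
      _ = μH[1] (segment ℝ z y) := (hausdorffMeasure_segment z y).symm
      _ ≤ _ := measure_mono hseg
  have main : K ∩ ((x + ·) '' K) = Kx ∩ ((x + ·) '' Kx) := by
    apply Set.Subset.antisymm
    · rintro y ⟨hy, z, hz, rfl⟩
      have hy' := key (x + z) z hy hz rfl
      have hz' : z ∈ Kx := by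
        rw [hKx]
        refine ⟨hz, ?_⟩
        have hrange : (Set.range fun t : ℝ => z + t • x) =
            Set.range fun t : ℝ => (x + z) + t • x := by
          ext p
          constructor
          · rintro ⟨t, rfl⟩; exact ⟨t - 1, by simp [sub_smul]; module⟩
          · rintro ⟨t, rfl⟩; exact ⟨t + 1, by simp [add_smul]; module⟩
        rw [hrange]
        exact hy'
      refine ⟨?_, z, hz', rfl⟩
      rw [hKx]; exact ⟨hy, hy'⟩
    · rintro y ⟨hy, z, hz, rfl⟩
      exact ⟨hKsub hy, z, hKsub hz, rfl⟩
  refine ⟨main, ?_⟩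
  unfold covar
  rw [← main]
end

section
/- Let K and H be convex bodies in ℝ². If there exist a constant c ∈ ℝ and an open neighbourhood U of the origin such that g_K(x) = g_H(x) + c for all x ∈ U, then the difference bodies of K and H coincide: K + (−K) = H + (−H). -/
open MeasureTheory Pointwise

namespace CovariogramAux

open Set ENNReal

/-! ### One-dimensional interval lemma -/

lemma interval_shift (S : Set ℝ) (hS : IsCompact S) (hSc : Convex ℝ S) {s : ℝ} (hs : 0 ≤ s) :
    volume (S ∩ ((s + ·) '' S)) + min (ENNReal.ofReal s) (volume S) = volume S := by
  rcases S.eq_empty_or_nonempty with h | h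
  · simp [h]
  · obtain ⟨a, b, hab, rfl⟩ : ∃ a b, a ≤ b ∧ S = Set.Icc a b := by
      refine ⟨sInf S, sSup S, ?_, eq_Icc_of_connected_compact ⟨h, hSc.isPreconnected⟩ hS⟩
      exact Real.sInf_le_sSup _ hS.bddBelow hS.bddAbove
    rw [image_const_add_Icc, Icc_inter_Icc, Real.volume_Icc, Real.volume_Icc,
      max_eq_right (by linarith : a ≤ s + a), min_eq_left (by linarith : b ≤ s + b)]
    rcases le_or_gt s (b - a) with hc | hc
    · rw [min_eq_left (ENNReal.ofReal_le_ofReal (by linarith)),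
        ← ENNReal.ofReal_add (by linarith) hs]
      ring_nf
    · rw [min_eq_right (ENNReal.ofReal_le_ofReal (by linarith)),
        ENNReal.ofReal_eq_zero.2 (by linarith), zero_add]

/-! ### Sections of planar sets -/

lemma sec_compact {A : Set (ℝ × ℝ)} (hA : IsCompact A) (x : ℝ) :
    IsCompact {y : ℝ | (x, y) ∈ A} := by
  have hcl : IsClosed {y : ℝ | (x, y) ∈ A} :=
    hA.isClosed.preimage (Continuous.prodMk_right x)
  have hbd : Bornology.IsBounded {y : ℝ | (x, y) ∈ A} := by
    refine (hA.image continuous_snd).isBounded.subset ?_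
    exact fun y hy => ⟨(x, y), hy, rfl⟩
  exact Metric.isCompact_of_isClosed_isBounded hcl hbd

lemma sec_convex {A : Set (ℝ × ℝ)} (hA : Convex ℝ A) (x : ℝ) :
    Convex ℝ {y : ℝ | (x, y) ∈ A} := by
  intro y1 h1 y2 h2 p q hp hq hpq
  have h := hA h1 h2 hp hq hpq
  have hx : p * x + q * x = x := by rw [← add_mul, hpq, one_mul]
  simpa [Prod.smul_mk, Prod.mk_add_mk, hx] using h

lemma sec_translate (A : Set (ℝ × ℝ)) (s x : ℝ) :
    {y : ℝ | (x, y) ∈ (((0, s) : ℝ × ℝ) + ·) '' A} = (s + ·) '' {y : ℝ | (x, y) ∈ A} := by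
  ext y
  constructor
  · rintro ⟨⟨a, b⟩, hab, h⟩
    obtain ⟨h1, h2⟩ := Prod.mk.injEq .. ▸ h
    exact ⟨b, by simpa [← h1] using hab, h2⟩
  · rintro ⟨b, hb, rfl⟩
    exact ⟨(x, b), hb, by simp⟩

lemma key_fubini {A : Set (ℝ × ℝ)} (hA : IsCompact A) (hAc : Convex ℝ A) {s : ℝ} (hs : 0 ≤ s) :
    volume (A ∩ ((((0, s) : ℝ × ℝ) + ·) '' A)) +
      ∫⁻ x : ℝ, min (ENNReal.ofReal s) (volume {y : ℝ | (x, y) ∈ A}) = volume A := by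
  have hAm : MeasurableSet A := hA.isClosed.measurableSet
  have hA'm : MeasurableSet ((((0, s) : ℝ × ℝ) + ·) '' A) :=
    (hA.image (continuous_const.add continuous_id)).isClosed.measurableSet
  have hIm : MeasurableSet (A ∩ ((((0, s) : ℝ × ℝ) + ·) '' A)) := hAm.inter hA'm
  rw [MeasureTheory.Measure.volume_eq_prod, MeasureTheory.Measure.prod_apply hIm,
    MeasureTheory.Measure.prod_apply hAm]
  rw [← MeasureTheory.lintegral_add_left (measurable_measure_prodMk_left hIm)]
  refine lintegral_congr fun x => ?_
  have : (Prod.mk x ⁻¹' (A ∩ ((((0, s) : ℝ × ℝ) + ·) '' A)))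
      = {y : ℝ | (x, y) ∈ A} ∩ ((s + ·) '' {y : ℝ | (x, y) ∈ A}) := by
    rw [Set.preimage_inter]
    congr 1
    exact sec_translate A s x
  rw [this]
  exact interval_shift _ (sec_compact hA x) (sec_convex hAc x) hs

/-! ### Comparison of `vol {len > 0}` from small-scale integrals -/

lemma lower_bd {f : ℝ → ℝ≥0∞} (hf : Measurable f) (c : ℝ≥0∞) :
    c * volume {x | c ≤ f x} ≤ ∫⁻ x, min c (f x) := by
  have hm : MeasurableSet {x | c ≤ f x} := measurableSet_le measurable_const hf
  calc c * volume {x | c ≤ f x} = ∫⁻ _ in {x | c ≤ f x}, c := (setLIntegral_const _ c).symm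
    _ = ∫⁻ x in {x | c ≤ f x}, min c (f x) :=
        setLIntegral_congr_fun hm (fun x hx => (min_eq_left hx).symm)
    _ ≤ ∫⁻ x, min c (f x) := lintegral_mono' Measure.restrict_le_self le_rfl

lemma upper_bd {f : ℝ → ℝ≥0∞} (hf : Measurable f) (c : ℝ≥0∞) :
    ∫⁻ x, min c (f x) ≤ c * volume {x | 0 < f x} := by
  have hm : MeasurableSet {x | 0 < f x} := measurableSet_lt measurable_const hf
  calc ∫⁻ x, min c (f x) ≤ ∫⁻ x, {x | 0 < f x}.indicator (fun _ => c) x := by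
        refine lintegral_mono fun x => ?_
        by_cases h : f x = 0
        · simp [h]
        · rw [Set.indicator_of_mem (by simpa [pos_iff_ne_zero] using h)]
          exact min_le_left _ _
    _ = c * volume {x | 0 < f x} := by rw [lintegral_indicator hm, setLIntegral_const]

lemma W_le {f g : ℝ → ℝ≥0∞} (hf : Measurable f) (hg : Measurable g) {ε : ℝ} (hε : 0 < ε)
    (heq : ∀ s : ℝ, 0 < s → s < ε →
      (∫⁻ x, min (ENNReal.ofReal s) (f x)) = ∫⁻ x, min (ENNReal.ofReal s) (g x)) :
    volume {x | 0 < f x} ≤ volume {x | 0 < g x} := by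
  set s : ℕ → ℝ := fun n => ε / 2 ^ (n + 1) with hsdef
  have hspos : ∀ n, 0 < s n := fun n => by positivity
  have hslt : ∀ n, s n < ε := fun n =>
    div_lt_self hε (one_lt_pow₀ (by norm_num) (Nat.succ_ne_zero n))
  have key : ∀ n, volume {x | ENNReal.ofReal (s n) ≤ f x} ≤ volume {x | 0 < g x} := by
    intro n
    have h0 : (ENNReal.ofReal (s n)) ≠ 0 := by simp [ENNReal.ofReal_eq_zero, not_le, hspos n]
    have hi : (ENNReal.ofReal (s n)) ≠ ⊤ := ENNReal.ofReal_ne_top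
    rw [← ENNReal.mul_le_mul_iff_right h0 hi]
    calc ENNReal.ofReal (s n) * volume {x | ENNReal.ofReal (s n) ≤ f x}
        ≤ ∫⁻ x, min (ENNReal.ofReal (s n)) (f x) := lower_bd hf _
      _ = ∫⁻ x, min (ENNReal.ofReal (s n)) (g x) := heq _ (hspos n) (hslt n)
      _ ≤ _ := upper_bd hg _
  have hunion : {x | 0 < f x} = ⋃ n, {x | ENNReal.ofReal (s n) ≤ f x} := by
    ext x
    simp only [Set.mem_setOf_eq, Set.mem_iUnion]
    constructor
    · intro hx
      by_cases htop : f x = ⊤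
      · exact ⟨0, htop ▸ le_top⟩
      · have ht : 0 < (f x).toReal := ENNReal.toReal_pos hx.ne' htop
        obtain ⟨n, hn⟩ := exists_pow_lt_of_lt_one (div_pos ht hε) (by norm_num : (2:ℝ)⁻¹ < 1)
        refine ⟨n, le_trans (ENNReal.ofReal_le_ofReal ?_) ENNReal.ofReal_toReal_le⟩
        have h2 : (2:ℝ)⁻¹ ^ (n+1) ≤ (2:ℝ)⁻¹ ^ n :=
          pow_le_pow_of_le_one (by norm_num) (by norm_num) (Nat.le_succ n)
        have hsn : s n = ε * (2:ℝ)⁻¹ ^ (n+1) := by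
          rw [hsdef]; field_simp; rw [← mul_pow]; norm_num
        rw [hsn]
        calc ε * (2:ℝ)⁻¹ ^ (n+1) ≤ ε * (2:ℝ)⁻¹ ^ n := by nlinarith
          _ ≤ ε * ((f x).toReal / ε) := by nlinarith
          _ = (f x).toReal := by field_simp
    · rintro ⟨n, hn⟩
      exact lt_of_lt_of_le (ENNReal.ofReal_pos.2 (hspos n)) hn
  rw [hunion]
  have hmono : Monotone fun n => {x | ENNReal.ofReal (s n) ≤ f x} := by
    intro n m hnm x hx
    refine le_trans (ENNReal.ofReal_le_ofReal ?_) hx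
    rw [hsdef]
    exact div_le_div_of_nonneg_left hε.le (by positivity)
      (pow_le_pow_right₀ one_le_two (by omega))
  rw [hmono.measure_iUnion]
  exact iSup_le key

/-! ### Width as measure of the projection -/

lemma W_eq {A : Set (ℝ × ℝ)} (hA : IsCompact A) (hAc : Convex ℝ A)
    (hAi : (interior A).Nonempty) :
    volume {x : ℝ | 0 < volume {y | (x, y) ∈ A}} =
      ENNReal.ofReal (sSup (Prod.fst '' A) - sInf (Prod.fst '' A)) := by
  obtain ⟨z0, hz0⟩ := hAi
  have hAne : A.Nonempty := ⟨z0, interior_subset hz0⟩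
  have hP : IsCompact (Prod.fst '' A) := hA.image continuous_fst
  have hPne : (Prod.fst '' A).Nonempty := hAne.image _
  set α := sInf (Prod.fst '' A) with hα
  set β := sSup (Prod.fst '' A) with hβ
  have hsub1 : {x : ℝ | 0 < volume {y | (x, y) ∈ A}} ⊆ Icc α β := by
    intro x hx
    have hx' : 0 < volume {y | (x, y) ∈ A} := hx
    have hne : {y | (x, y) ∈ A}.Nonempty := nonempty_of_measure_ne_zero hx'.ne'
    obtain ⟨y, hy⟩ := hne
    have hmem : x ∈ Prod.fst '' A := ⟨(x, y), hy, rfl⟩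
    exact ⟨csInf_le hP.bddBelow hmem, le_csSup hP.bddAbove hmem⟩
  have hsub2 : Ioo α β ⊆ {x : ℝ | 0 < volume {y | (x, y) ∈ A}} := by
    intro x hx
    have hc : ∃ c ∈ interior A, c.1 = x := by
      rcases lt_trichotomy x z0.1 with hlt | heq | hgt
      · have hαmem : α ∈ Prod.fst '' A := hP.sInf_mem hPne
        obtain ⟨p, hp, hpx⟩ := hαmem
        have hz1 : α ≤ z0.1 := csInf_le hP.bddBelow ⟨z0, interior_subset hz0, rfl⟩
        have hd : α < x := hx.1
        set t := (z0.1 - x) / (z0.1 - α) with ht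
        have h1 : 0 < z0.1 - α := by linarith
        have ht0 : 0 ≤ t := div_nonneg (by linarith) (by linarith)
        have ht1 : t < 1 := by rw [ht, div_lt_one h1]; linarith
        refine ⟨(1 - t) • z0 + t • p, hAc.combo_interior_self_mem_interior hz0 hp
          (by linarith) ht0 (by ring), ?_⟩
        have hfst : ((1 - t) • z0 + t • p).1 = (1 - t) * z0.1 + t * α := by
          simp [Prod.smul_mk, hpx]
        rw [hfst, ht]; field_simp; ring
      · exact ⟨z0, hz0, heq.symm⟩
      · have hβmem : β ∈ Prod.fst '' A := hP.sSup_mem hPne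
        obtain ⟨q, hq, hqx⟩ := hβmem
        have hd : x < β := hx.2
        set t := (x - z0.1) / (β - z0.1) with ht
        have h1 : 0 < β - z0.1 := by linarith
        have ht0 : 0 ≤ t := div_nonneg (by linarith) (by linarith)
        have ht1 : t < 1 := by rw [ht, div_lt_one h1]; linarith
        refine ⟨(1 - t) • z0 + t • q, hAc.combo_interior_self_mem_interior hz0 hq
          (by linarith) ht0 (by ring), ?_⟩
        have hfst : ((1 - t) • z0 + t • q).1 = (1 - t) * z0.1 + t * β := by
          simp [Prod.smul_mk, hqx]
        rw [hfst, ht]; field_simp; ring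
    obtain ⟨c, hcI, hcx⟩ := hc
    obtain ⟨r, hr, hball⟩ : ∃ r > 0, Metric.ball c r ⊆ A := by
      rw [mem_interior_iff_mem_nhds, Metric.mem_nhds_iff] at hcI
      obtain ⟨r, hr, h⟩ := hcI
      exact ⟨r, hr, h⟩
    have hsec : Metric.ball c.2 r ⊆ {y | (x, y) ∈ A} := by
      intro y hy
      refine hball ?_
      rw [Metric.mem_ball] at hy ⊢
      simp only [Prod.dist_eq]
      simp only [hcx]
      simpa [dist_self, max_eq_right dist_nonneg] using hy
    exact lt_of_lt_of_le (Metric.measure_ball_pos volume c.2 hr) (measure_mono hsec)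
  have hle1 : volume {x : ℝ | 0 < volume {y | (x, y) ∈ A}} ≤ ENNReal.ofReal (β - α) := by
    refine le_trans (measure_mono hsub1) ?_
    rw [Real.volume_Icc]
  have hle2 : ENNReal.ofReal (β - α) ≤ volume {x : ℝ | 0 < volume {y | (x, y) ∈ A}} := by
    refine le_trans ?_ (measure_mono hsub2)
    rw [Real.volume_Ioo]
  exact le_antisymm hle1 hle2

/-! ### Orthonormal basis adapted to a direction, and the change of coordinates -/

noncomputable section

abbrev E2 := EuclideanSpace ℝ (Fin 2)

def perp (v : E2) : E2 := WithLp.toLp 2 ![-(v 1), v 0]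

variable {v : E2}

lemma perp_apply_zero (v : E2) : perp v 0 = -(v 1) := rfl
lemma perp_apply_one (v : E2) : perp v 1 = v 0 := rfl

lemma norm_sq_eq (w : E2) : ‖w‖ ^ 2 = w 0 * w 0 + w 1 * w 1 := by
  rw [← real_inner_self_eq_norm_sq]
  rw [PiLp.inner_apply, Fin.sum_univ_two]
  simp [RCLike.inner_apply]; ring

lemma perp_orthonormal (hv : ‖v‖ = 1) : Orthonormal ℝ (![v, perp v] : Fin 2 → E2) := by
  have hv2 : v 0 * v 0 + v 1 * v 1 = 1 := by rw [← norm_sq_eq, hv]; norm_num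
  have hnv : ‖perp v‖ = 1 := by
    have := norm_sq_eq (perp v)
    rw [perp_apply_zero, perp_apply_one] at this
    nlinarith [norm_nonneg (perp v)]
  rw [orthonormal_iff_ite]
  intro i j
  fin_cases i <;> fin_cases j <;>
    simp only [Matrix.cons_val_zero, Matrix.cons_val_one, Matrix.head_cons, PiLp.inner_apply,
      RCLike.inner_apply, starRingEnd_apply, star_trivial, Fin.sum_univ_two, perp_apply_zero,
      perp_apply_one, Fin.mk_zero, Fin.mk_one, if_true, if_false, Fin.zero_eq_one_iff,
      Fin.one_eq_zero_iff, Nat.succ_ne_self]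
  · exact hv2
  · simp; ring
  · simp; ring
  · nlinarith [hv2]

def onb (hv : ‖v‖ = 1) : OrthonormalBasis (Fin 2) ℝ E2 :=
  OrthonormalBasis.mk (perp_orthonormal hv) (by
    rw [← (basisOfOrthonormalOfCardEqFinrank (perp_orthonormal hv)
      (by simp [finrank_euclideanSpace_fin])).span_eq]
    rw [coe_basisOfOrthonormalOfCardEqFinrank])

lemma onb_zero (hv : ‖v‖ = 1) : onb hv 0 = v := by
  rw [onb, OrthonormalBasis.coe_mk]; rfl

lemma onb_one (hv : ‖v‖ = 1) : onb hv 1 = perp v := by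
  rw [onb, OrthonormalBasis.coe_mk]; rfl

def Phi (b : OrthonormalBasis (Fin 2) ℝ E2) : E2 → ℝ × ℝ := fun k => (b.repr k 0, b.repr k 1)

variable (b : OrthonormalBasis (Fin 2) ℝ E2)

lemma Phi_mp : MeasurePreserving (Phi b) volume volume := by
  have h1 : MeasurePreserving (⇑b.repr) volume volume := b.measurePreserving_repr
  have h2 : MeasurePreserving (MeasurableEquiv.toLp 2 (Fin 2 → ℝ)).symm volume volume :=
    EuclideanSpace.volume_preserving_symm_measurableEquiv_toLp (Fin 2)
  have h3 : MeasurePreserving (MeasurableEquiv.finTwoArrow (α := ℝ)) volume volume :=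
    volume_preserving_finTwoArrow ℝ
  exact (h3.comp (h2.comp h1) : _)

def PhiH (b : OrthonormalBasis (Fin 2) ℝ E2) : E2 ≃ₜ ℝ × ℝ :=
  b.repr.toHomeomorph.trans
    ((PiLp.continuousLinearEquiv 2 ℝ (fun _ : Fin 2 => ℝ)).toHomeomorph.trans
      (Homeomorph.piFinTwo (fun _ : Fin 2 => ℝ)))

lemma PhiH_coe : ⇑(PhiH b) = Phi b := rfl

lemma Phi_add (x y : E2) : Phi b (x + y) = Phi b x + Phi b y := by
  simp [Phi, Prod.ext_iff]

lemma Phi_linear : IsLinearMap ℝ (Phi b) :=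
  ⟨Phi_add b, fun c x => by simp [Phi, Prod.ext_iff]⟩

lemma Phi_vol {S : Set E2} (hS : MeasurableSet S) : volume (Phi b '' S) = volume S := by
  have h : Phi b '' S = ((PhiH b).toMeasurableEquiv).symm ⁻¹' S := by
    rw [← PhiH_coe]
    exact Equiv.image_eq_preimage_symm _ _
  rw [h]
  exact ((Phi_mp b : MeasurePreserving ((PhiH b).toMeasurableEquiv) volume volume).symm
    _).measure_preimage hS.nullMeasurableSet

lemma Phi_smul_basis_one (s : ℝ) : Phi b (s • b 1) = ((0 : ℝ), s) := by
  have h : b.repr (s • b 1) = s • EuclideanSpace.single 1 (1:ℝ) := by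
    rw [_root_.map_smul, b.repr_self]
  simp [Phi, h, EuclideanSpace.single_apply]

end

lemma Phi_injective (b : OrthonormalBasis (Fin 2) ℝ E2) : Function.Injective (Phi b) := by
  rw [← PhiH_coe]; exact (PhiH b).injective

lemma widths_eq (K H : Set E2)
    (hKcp : IsCompact K) (hKc : Convex ℝ K) (hKi : (interior K).Nonempty)
    (hHcp : IsCompact H) (hHc : Convex ℝ H) (hHi : (interior H).Nonempty)
    {c ε : ℝ} (hε : 0 < ε)
    (hg : ∀ x : E2, ‖x‖ < ε → covar K x = covar H x + c)
    {v : E2} (hv : ‖v‖ = 1) :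
    sSup ((fun k => (inner ℝ v k : ℝ)) '' K) - sInf ((fun k => (inner ℝ v k : ℝ)) '' K)
      = sSup ((fun k => (inner ℝ v k : ℝ)) '' H) - sInf ((fun k => (inner ℝ v k : ℝ)) '' H) := by
  classical
  set b := onb hv with hb
  have body : ∀ (S : Set E2), IsCompact S → Convex ℝ S → (interior S).Nonempty →
      IsCompact (Phi b '' S) ∧ Convex ℝ (Phi b '' S) ∧ (interior (Phi b '' S)).Nonempty := by
    intro S hS hSc hSi
    refine ⟨?_, hSc.is_linear_image (Phi_linear b), ?_⟩
    · rw [← PhiH_coe]; exact hS.image (PhiH b).continuous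
    · rw [← PhiH_coe, ← Homeomorph.image_interior]
      exact hSi.image _
  obtain ⟨hAKcp, hAKc, hAKi⟩ := body K hKcp hKc hKi
  obtain ⟨hAHcp, hAHc, hAHi⟩ := body H hHcp hHc hHi
  set AK := Phi b '' K with hAK
  set AH := Phi b '' H with hAH
  have hAKm : MeasurableSet AK := hAKcp.isClosed.measurableSet
  have hAHm : MeasurableSet AH := hAHcp.isClosed.measurableSet
  have hlenK : Measurable (fun x => volume {y : ℝ | (x, y) ∈ AK}) :=
    measurable_measure_prodMk_left hAKm
  have hlenH : Measurable (fun x => volume {y : ℝ | (x, y) ∈ AH}) :=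
    measurable_measure_prodMk_left hAHm
  have htr : ∀ (S : Set E2), MeasurableSet S → IsCompact S → ∀ s : ℝ,
      volume (S ∩ ((s • (b 1) + ·) '' S))
        = volume ((Phi b '' S) ∩ (((((0:ℝ), s) : ℝ × ℝ) + ·) '' (Phi b '' S))) := by
    intro S hSm hScl s
    have himg : Phi b '' (S ∩ ((s • (b 1) + ·) '' S))
        = (Phi b '' S) ∩ (((((0:ℝ), s) : ℝ × ℝ) + ·) '' (Phi b '' S)) := by
      rw [Set.image_inter (Phi_injective b)]
      congr 1
      rw [← Set.image_comp, ← Set.image_comp]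
      refine Set.image_congr fun k _ => ?_
      simp only [Function.comp_apply]
      rw [Phi_add, Phi_smul_basis_one]
    rw [← himg]
    exact (Phi_vol b (hSm.inter
      ((hScl.image (continuous_const.add continuous_id)).isClosed.measurableSet))).symm
  have hM : ∀ s : ℝ, 0 < s → s < ε →
      (∫⁻ x : ℝ, min (ENNReal.ofReal s) (volume {y : ℝ | (x, y) ∈ AK}))
        = ∫⁻ x : ℝ, min (ENNReal.ofReal s) (volume {y : ℝ | (x, y) ∈ AH}) := by
    intro s hs hsε
    have hfK := key_fubini hAKcp hAKc hs.le
    have hfH := key_fubini hAHcp hAHc hs.le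
    have hnorm : ‖s • (b 1)‖ = s := by
      rw [norm_smul]
      have h1 : ‖b 1‖ = 1 := b.orthonormal.1 1
      rw [h1, mul_one, Real.norm_eq_abs, abs_of_pos hs]
    have hgs := hg (s • (b 1)) (by rw [hnorm]; exact hsε)
    have hg0 := hg 0 (by simpa using hε)
    have h0K : covar K 0 = (volume K).toReal := by simp [covar]
    have h0H : covar H 0 = (volume H).toReal := by simp [covar]
    have hKtr := htr K hKcp.isClosed.measurableSet hKcp s
    have hHtr := htr H hHcp.isClosed.measurableSet hHcp s
    have hvolK : volume AK = volume K := Phi_vol b hKcp.isClosed.measurableSet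
    have hvolH : volume AH = volume H := Phi_vol b hHcp.isClosed.measurableSet
    set MK := ∫⁻ x : ℝ, min (ENNReal.ofReal s) (volume {y : ℝ | (x, y) ∈ AK}) with hMK
    set MH := ∫⁻ x : ℝ, min (ENNReal.ofReal s) (volume {y : ℝ | (x, y) ∈ AH}) with hMH
    set GK := volume (AK ∩ (((((0:ℝ), s) : ℝ × ℝ) + ·) '' AK)) with hGK
    set GH := volume (AH ∩ (((((0:ℝ), s) : ℝ × ℝ) + ·) '' AH)) with hGH
    have hKfin : volume K ≠ ⊤ := hKcp.measure_lt_top.ne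
    have hHfin : volume H ≠ ⊤ := hHcp.measure_lt_top.ne
    have hMKfin : MK ≠ ⊤ := by
      refine ne_top_of_le_ne_top (hvolK ▸ hKfin) ?_
      calc MK ≤ GK + MK := le_add_self
        _ = volume AK := hfK
    have hMHfin : MH ≠ ⊤ := by
      refine ne_top_of_le_ne_top (hvolH ▸ hHfin) ?_
      calc MH ≤ GH + MH := le_add_self
        _ = volume AH := hfH
    have hGKfin : GK ≠ ⊤ := by
      refine ne_top_of_le_ne_top (hvolK ▸ hKfin) ?_
      calc GK ≤ GK + MK := le_self_add
        _ = volume AK := hfK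
    have hGHfin : GH ≠ ⊤ := by
      refine ne_top_of_le_ne_top (hvolH ▸ hHfin) ?_
      calc GH ≤ GH + MH := le_self_add
        _ = volume AH := hfH
    have hrK : GK.toReal + MK.toReal = (volume K).toReal := by
      rw [← ENNReal.toReal_add hGKfin hMKfin, hfK, hvolK]
    have hrH : GH.toReal + MH.toReal = (volume H).toReal := by
      rw [← ENNReal.toReal_add hGHfin hMHfin, hfH, hvolH]
    have hcovK : covar K (s • (b 1)) = GK.toReal := by
      show (volume (K ∩ ((s • (b 1) + ·) '' K))).toReal = GK.toReal
      rw [hKtr]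
    have hcovH : covar H (s • (b 1)) = GH.toReal := by
      show (volume (H ∩ ((s • (b 1) + ·) '' H))).toReal = GH.toReal
      rw [hHtr]
    rw [h0K, h0H] at hg0
    rw [hcovK, hcovH] at hgs
    exact (ENNReal.toReal_eq_toReal_iff' hMKfin hMHfin).1 (by linarith)
  have hWeq : volume {x : ℝ | 0 < volume {y | (x, y) ∈ AK}}
      = volume {x : ℝ | 0 < volume {y | (x, y) ∈ AH}} :=
    le_antisymm (W_le hlenK hlenH hε hM) (W_le hlenH hlenK hε fun s h1 h2 => (hM s h1 h2).symm)
  rw [W_eq hAKcp hAKc hAKi, W_eq hAHcp hAHc hAHi] at hWeq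
  have hproj : ∀ S : Set E2, Prod.fst '' (Phi b '' S) = (fun k => (inner ℝ v k : ℝ)) '' S := by
    intro S
    rw [← Set.image_comp]
    refine Set.image_congr fun k _ => ?_
    show b.repr k 0 = (inner ℝ v k : ℝ)
    rw [b.repr_apply_apply]
    rw [hb, onb_zero]
  rw [hproj K, hproj H] at hWeq
  have hcont : Continuous (fun k : E2 => (inner ℝ v k : ℝ)) :=
    Continuous.inner continuous_const continuous_id
  have hKne : K.Nonempty := hKi.mono interior_subset
  have hHne : H.Nonempty := hHi.mono interior_subset
  have hKin : sInf ((fun k => (inner ℝ v k : ℝ)) '' K) ≤ sSup ((fun k => (inner ℝ v k : ℝ)) '' K) :=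
    Real.sInf_le_sSup _ ((hKcp.image hcont).bddBelow) ((hKcp.image hcont).bddAbove)
  have hHin : sInf ((fun k => (inner ℝ v k : ℝ)) '' H) ≤ sSup ((fun k => (inner ℝ v k : ℝ)) '' H) :=
    Real.sInf_le_sSup _ ((hHcp.image hcont).bddBelow) ((hHcp.image hcont).bddAbove)
  exact (ENNReal.ofReal_eq_ofReal_iff (by linarith) (by linarith)).1 hWeq

lemma diff_subset (K H : Set E2)
    (hKcp : IsCompact K) (hHcp : IsCompact H) (hHc : Convex ℝ H)
    (hKne : K.Nonempty) (hHne : H.Nonempty)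
    (hw : ∀ v : E2, ‖v‖ = 1 →
      sSup ((fun k => (inner ℝ v k : ℝ)) '' K) - sInf ((fun k => (inner ℝ v k : ℝ)) '' K)
        = sSup ((fun k => (inner ℝ v k : ℝ)) '' H) - sInf ((fun k => (inner ℝ v k : ℝ)) '' H)) :
    K - K ⊆ H - H := by
  intro x hx
  by_contra hxH
  have hHHc : Convex ℝ (H - H) := hHc.sub hHc
  have hHHcp : IsCompact (H - H) := by
    have himg : (fun p : E2 × E2 => p.1 - p.2) '' (H ×ˢ H) = H - H := by
      rw [Set.image_prod]
      exact Set.image2_sub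
    exact himg ▸ ((hHcp.prod hHcp).image continuous_sub)
  obtain ⟨f, t, hft, htx⟩ := geometric_hahn_banach_closed_point hHHc hHHcp.isClosed hxH
  set v0 := (InnerProductSpace.toDual ℝ E2).symm f with hv0def
  have hv0app : ∀ y : E2, (inner ℝ v0 y : ℝ) = f y := fun y =>
    InnerProductSpace.toDual_symm_apply
  have h0mem : (0 : E2) ∈ H - H := by
    obtain ⟨h0, hh0⟩ := hHne
    have := Set.sub_mem_sub hh0 hh0
    rwa [sub_self] at this
  have ht0 : 0 < t := by simpa using hft 0 h0mem
  have hfx : 0 < f x := lt_trans ht0 htx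
  have hv0ne : v0 ≠ 0 := by
    intro h
    have h2 := hv0app x
    rw [h, inner_zero_left] at h2
    exact absurd h2.symm (ne_of_gt hfx)
  set vu := ‖v0‖⁻¹ • v0 with hvudef
  have hvu : ‖vu‖ = 1 := norm_smul_inv_norm hv0ne
  have hinner : ∀ y : E2, (inner ℝ vu y : ℝ) = ‖v0‖⁻¹ * f y := fun y => by
    rw [hvudef, real_inner_smul_left, hv0app]
  have hcont : Continuous fun k : E2 => (inner ℝ vu k : ℝ) :=
    Continuous.inner continuous_const continuous_id
  obtain ⟨k1, hk1, hk1max⟩ := hKcp.exists_isMaxOn hKne hcont.continuousOn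
  obtain ⟨k2, hk2, hk2min⟩ := hKcp.exists_isMinOn hKne hcont.continuousOn
  obtain ⟨h1, hh1, hh1max⟩ := hHcp.exists_isMaxOn hHne hcont.continuousOn
  obtain ⟨h2, hh2, hh2min⟩ := hHcp.exists_isMinOn hHne hcont.continuousOn
  have hsupK : sSup ((fun k => (inner ℝ vu k : ℝ)) '' K) = (inner ℝ vu k1 : ℝ) :=
    IsGreatest.csSup_eq ⟨Set.mem_image_of_mem _ hk1, by
      rintro y ⟨k, hk, rfl⟩; exact hk1max hk⟩
  have hinfK : sInf ((fun k => (inner ℝ vu k : ℝ)) '' K) = (inner ℝ vu k2 : ℝ) :=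
    IsLeast.csInf_eq ⟨Set.mem_image_of_mem _ hk2, by
      rintro y ⟨k, hk, rfl⟩; exact hk2min hk⟩
  have hsupH : sSup ((fun k => (inner ℝ vu k : ℝ)) '' H) = (inner ℝ vu h1 : ℝ) :=
    IsGreatest.csSup_eq ⟨Set.mem_image_of_mem _ hh1, by
      rintro y ⟨k, hk, rfl⟩; exact hh1max hk⟩
  have hinfH : sInf ((fun k => (inner ℝ vu k : ℝ)) '' H) = (inner ℝ vu h2 : ℝ) :=
    IsLeast.csInf_eq ⟨Set.mem_image_of_mem _ hh2, by
      rintro y ⟨k, hk, rfl⟩; exact hh2min hk⟩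
  have hweq := hw vu hvu
  rw [hsupK, hinfK, hsupH, hinfH] at hweq
  obtain ⟨a, ha, bb, hbb, rfl⟩ := Set.mem_sub.1 hx
  have hchain : (inner ℝ vu (a - bb) : ℝ) ≤ (inner ℝ vu k1 : ℝ) - (inner ℝ vu k2 : ℝ) := by
    rw [inner_sub_right]
    have h1' : (inner ℝ vu a : ℝ) ≤ (inner ℝ vu k1 : ℝ) := hk1max ha
    have h2' : (inner ℝ vu k2 : ℝ) ≤ (inner ℝ vu bb : ℝ) := hk2min hbb
    linarith
  have hH12 : (inner ℝ vu (h1 - h2) : ℝ) = (inner ℝ vu h1 : ℝ) - (inner ℝ vu h2 : ℝ) :=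
    inner_sub_right _ _ _
  have hlt : (inner ℝ vu (h1 - h2) : ℝ) < (inner ℝ vu (a - bb) : ℝ) := by
    rw [hinner, hinner]
    have hmem : h1 - h2 ∈ H - H := Set.sub_mem_sub hh1 hh2
    have hflt : f (h1 - h2) < f (a - bb) := lt_trans (hft _ hmem) htx
    have hpos : 0 < ‖v0‖⁻¹ := by
      have : 0 < ‖v0‖ := norm_pos_iff.2 hv0ne
      positivity
    nlinarith
  rw [hH12, ← hweq] at hlt
  linarith

end CovariogramAux

theorem diff_bodies_eq_of_covariogram_near_origin (K H : Set (EuclideanSpace ℝ (Fin 2)))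
    (hK : IsConvexBody K) (hH : IsConvexBody H)
    (hg : ∃ c : ℝ, ∃ U : Set (EuclideanSpace ℝ (Fin 2)), IsOpen U ∧
      (0 : EuclideanSpace ℝ (Fin 2)) ∈ U ∧ ∀ x ∈ U, covar K x = covar H x + c) :
    K - K = H - H := by
  obtain ⟨c, U, hUo, hU0, hgU⟩ := hg
  obtain ⟨hKcp, hKc, hKi⟩ := hK
  obtain ⟨hHcp, hHc, hHi⟩ := hH
  obtain ⟨ε, hε, hball⟩ := Metric.isOpen_iff.1 hUo 0 hU0
  have hg1 : ∀ x : EuclideanSpace ℝ (Fin 2), ‖x‖ < ε → covar K x = covar H x + c := by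
    intro x hx
    exact hgU x (hball (by simpa [Metric.mem_ball, dist_zero_right] using hx))
  have hg2 : ∀ x : EuclideanSpace ℝ (Fin 2), ‖x‖ < ε → covar H x = covar K x + (-c) := by
    intro x hx
    rw [hg1 x hx]; ring
  have hKne : K.Nonempty := hKi.mono interior_subset
  have hHne : H.Nonempty := hHi.mono interior_subset
  apply Set.Subset.antisymm
  · exact CovariogramAux.diff_subset K H hKcp hHcp hHc hKne hHne fun v hv =>
      CovariogramAux.widths_eq K H hKcp hKc hKi hHcp hHc hHi hε hg1 hv
  · exact CovariogramAux.diff_subset H K hHcp hKcp hKc hHne hKne fun v hv =>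
      CovariogramAux.widths_eq H K hHcp hHc hHi hKcp hKc hKi hε hg2 hv
end
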